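/- Let M be a finitely presented left R-module that is 𝒜-coherent. Then every left R-module is strongly M-𝒜-injective if and only if every right R-module is strongly M-𝒜-flat. -/

import Mathlib

open TensorProduct MulOpposite CategoryTheory

universe u

section NC

variable (R : Type u) [Ring R]

/-- The defining relations of the tensor product `N ⊗[R] X` of a right `R`-module `N`
and a left `R`-module `X` over a (possibly noncommutative) ring `R`, inside `N ⊗[ℤ] X`. -/
def ncRel (N : Type u) [AddCommGroup N] [Module Rᵐᵒᵖ N]
    (X : Type u) [AddCommGroup X] [Module R X] : Submodule ℤ (N ⊗[ℤ] X) :=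
  Submodule.span ℤ {z | ∃ (r : R) (n : N) (x : X), z = (op r • n) ⊗ₜ[ℤ] x - n ⊗ₜ[ℤ] (r • x)}

/-- The tensor product `N ⊗[R] X` of a right `R`-module `N` and a left `R`-module `X`
over a (possibly noncommutative) ring `R`. -/
abbrev NCTensor (N : Type u) [AddCommGroup N] [Module Rᵐᵒᵖ N]
    (X : Type u) [AddCommGroup X] [Module R X] : Type u :=
  (N ⊗[ℤ] X) ⧸ ncRel R N X

/-- Functoriality of the tensor product in the left (right-module) variable. -/
noncomputable def ncMapL {N N' : Type u} [AddCommGroup N] [Module Rᵐᵒᵖ N]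
    [AddCommGroup N'] [Module Rᵐᵒᵖ N'] (g : N →ₗ[Rᵐᵒᵖ] N')
    (X : Type u) [AddCommGroup X] [Module R X] :
    NCTensor R N X →ₗ[ℤ] NCTensor R N' X :=
  Submodule.mapQ _ _ (LinearMap.rTensor X g.toAddMonoidHom.toIntLinearMap) (by
    rw [ncRel, Submodule.span_le]
    rintro _ ⟨r, n, x, rfl⟩
    refine Submodule.subset_span ⟨r, g n, x, ?_⟩
    erw [map_sub, LinearMap.rTensor_tmul, LinearMap.rTensor_tmul]
    simp [map_smul])

/-- Functoriality of the tensor product in the right (left-module) variable. -/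
noncomputable def ncMap (N : Type u) [AddCommGroup N] [Module Rᵐᵒᵖ N]
    {X Y : Type u} [AddCommGroup X] [Module R X] [AddCommGroup Y] [Module R Y]
    (f : X →ₗ[R] Y) : NCTensor R N X →ₗ[ℤ] NCTensor R N Y :=
  Submodule.mapQ _ _ (LinearMap.lTensor N f.toAddMonoidHom.toIntLinearMap) (by
    rw [ncRel, Submodule.span_le]
    rintro _ ⟨r, n, x, rfl⟩
    refine Submodule.subset_span ⟨r, n, f x, ?_⟩
    erw [map_sub, LinearMap.lTensor_tmul, LinearMap.lTensor_tmul]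
    simp [map_smul])

lemma ncMap_mk (N : Type u) [AddCommGroup N] [Module Rᵐᵒᵖ N]
    {X Y : Type u} [AddCommGroup X] [Module R X] [AddCommGroup Y] [Module R Y]
    (f : X →ₗ[R] Y) (w : N ⊗[ℤ] X) :
    ncMap R N f (Submodule.Quotient.mk w) =
      Submodule.Quotient.mk (LinearMap.lTensor N f.toAddMonoidHom.toIntLinearMap w) := by
  unfold ncMap
  exact Submodule.mapQ_apply (p := ncRel R N X) (q := ncRel R N Y) (LinearMap.lTensor N f.toAddMonoidHom.toIntLinearMap) w

section lemmas

variable {R}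
variable {X Y Z : Type u} [AddCommGroup X] [Module R X] [AddCommGroup Y] [Module R Y]
  [AddCommGroup Z] [Module R Z]

lemma toInt_id : ((LinearMap.id : X →ₗ[R] X).toAddMonoidHom).toIntLinearMap =
    (LinearMap.id : X →ₗ[ℤ] X) := rfl

lemma toInt_comp (f : X →ₗ[R] Y) (g : Y →ₗ[R] Z) :
    ((g ∘ₗ f).toAddMonoidHom).toIntLinearMap =
      g.toAddMonoidHom.toIntLinearMap ∘ₗ f.toAddMonoidHom.toIntLinearMap := rfl

lemma toInt_add (f g : X →ₗ[R] Y) :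
    ((f + g).toAddMonoidHom).toIntLinearMap =
      f.toAddMonoidHom.toIntLinearMap + g.toAddMonoidHom.toIntLinearMap := rfl

end lemmas

/-- The functor `N ⊗[R] - : R-Mod ⥤ Ab` for a right `R`-module `N`. -/
noncomputable def ncTensorFunctor (N : Type u) [AddCommGroup N] [Module Rᵐᵒᵖ N] :
    ModuleCat.{u} R ⥤ ModuleCat.{u} ℤ where
  obj X := ModuleCat.of ℤ (NCTensor R N X)
  map {X Y} f := ModuleCat.ofHom (ncMap R N f.hom)
  map_id X := by
    refine ModuleCat.hom_ext <| LinearMap.ext fun z => ?_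
    obtain ⟨w, rfl⟩ := Submodule.Quotient.mk_surjective _ z
    show ncMap R N (LinearMap.id : X →ₗ[R] X) _ = _
    rw [ncMap_mk, toInt_id, LinearMap.lTensor_id]
    rfl
  map_comp {X Y Z} f g := by
    refine ModuleCat.hom_ext <| LinearMap.ext fun z => ?_
    obtain ⟨w, rfl⟩ := Submodule.Quotient.mk_surjective _ z
    show ncMap R N (g.hom ∘ₗ f.hom) (Submodule.Quotient.mk w) = ncMap R N g.hom (ncMap R N f.hom (Submodule.Quotient.mk w))
    rw [ncMap_mk, ncMap_mk, ncMap_mk, toInt_comp, LinearMap.lTensor_comp]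
    rfl

instance ncTensorFunctor_additive (N : Type u) [AddCommGroup N] [Module Rᵐᵒᵖ N] :
    (ncTensorFunctor R N).Additive where
  map_add {X Y f g} := by
    refine ModuleCat.hom_ext <| LinearMap.ext fun z => ?_
    obtain ⟨w, rfl⟩ := Submodule.Quotient.mk_surjective _ z
    show ncMap R N (f.hom + g.hom) (Submodule.Quotient.mk w) = ncMap R N f.hom (Submodule.Quotient.mk w) + ncMap R N g.hom (Submodule.Quotient.mk w)
    rw [ncMap_mk, ncMap_mk, ncMap_mk, toInt_add, LinearMap.lTensor_add]
    rfl

/-- `Tor₁^R(N, Z)` for a right `R`-module `N` and a left `R`-module `Z`, defined as the value at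
`Z` of the first left derived functor of the functor `N ⊗[R] -`. -/
noncomputable def ncTor1 (N : Type u) [AddCommGroup N] [Module Rᵐᵒᵖ N]
    (Z : Type u) [AddCommGroup Z] [Module R Z] : ModuleCat.{u} ℤ :=
  (((ncTensorFunctor R N).leftDerived 1).obj (ModuleCat.of R Z))

/-- `Tor₁^R(N, Z) = 0`. -/
def Tor1IsZero (N : Type u) [AddCommGroup N] [Module Rᵐᵒᵖ N]
    (Z : Type u) [AddCommGroup Z] [Module R Z] : Prop :=
  Limits.IsZero (ncTor1 R N Z)

/-- `Ext¹_R(Z, T) = 0`, where `Ext` is the derived functor of `Hom` on the category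
of left `R`-modules. -/
def Ext1IsZero (Z T : Type u) [AddCommGroup Z] [Module R Z] [AddCommGroup T] [Module R T] :
    Prop :=
  Limits.IsZero ((((Ext ℤ (ModuleCat.{u} R) 1).obj (Opposite.op (ModuleCat.of R Z))).obj
    (ModuleCat.of R T)))

end NC

open MulOpposite


section Char

variable (R : Type u) [Ring R]

/-- The right `R`-module structure on the character module `A⁺ = Hom_ℤ(A, ℚ/ℤ)` of a left
`R`-module `A`, given by `(c • r) (a) = c (r • a)`. -/
instance charModuleRight (A : Type u) [AddCommGroup A] [Module R A] :
    Module Rᵐᵒᵖ (CharacterModule A) where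
  smul r c := (c.comp (DistribMulAction.toAddMonoidHom A r.unop) : A →+ _)
  one_smul c := DFunLike.ext _ _ fun a => congrArg c (one_smul R a)
  mul_smul r s c := DFunLike.ext _ _ fun a => congrArg c (mul_smul s.unop r.unop a)
  smul_zero r := rfl
  smul_add r c c' := rfl
  add_smul r s c := DFunLike.ext _ _ fun a => by
    show c ((r.unop + s.unop) • a) = c (r.unop • a) + c (s.unop • a)
    rw [add_smul, map_add]
  zero_smul c := DFunLike.ext _ _ fun a => by
    show c ((0 : R) • a) = 0
    rw [zero_smul, map_zero]

/-- The left `R`-module structure on the character module `N⁺ = Hom_ℤ(N, ℚ/ℤ)` of a right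
`R`-module `N`, given by `(r • c) (n) = c (n • r)`. -/
instance charModuleLeft (N : Type u) [AddCommGroup N] [Module Rᵐᵒᵖ N] :
    Module R (CharacterModule N) where
  smul r c := (c.comp (DistribMulAction.toAddMonoidHom N (op r)) : N →+ _)
  one_smul c := DFunLike.ext _ _ fun n => congrArg c (one_smul Rᵐᵒᵖ n)
  mul_smul r s c := DFunLike.ext _ _ fun n => congrArg c (mul_smul (op s) (op r) n)
  smul_zero r := rfl
  smul_add r c c' := rfl
  add_smul r s c := DFunLike.ext _ _ fun n => by
    show c ((op r + op s) • n) = c (op r • n) + c (op s • n)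
    rw [add_smul, map_add]
  zero_smul c := DFunLike.ext _ _ fun n => by
    show c ((0 : Rᵐᵒᵖ) • n) = 0
    rw [zero_smul, map_zero]

end Char

section Classes

variable (R : Type u) [Ring R] (M : Type u) [AddCommGroup M] [Module R M]

/-- `T` is `M`-`𝒜`-injective if, for every `A ∈ 𝒜`, every homomorphism `A → T` extends to `M`,
i.e. the restriction map `Hom(M, T) → Hom(A, T)` is surjective. -/
def MAInjective (𝒜 : Set (Submodule R M)) (T : Type u) [AddCommGroup T] [Module R T] : Prop :=
  ∀ A ∈ 𝒜, ∀ f : (↥A) →ₗ[R] T, ∃ g : M →ₗ[R] T, g ∘ₗ A.subtype = f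

/-- `T` is strongly `M`-`𝒜`-injective if `Ext¹_R(M/A, T) = 0` for all `A ∈ 𝒜`. -/
def SMAInjective (𝒜 : Set (Submodule R M)) (T : Type u) [AddCommGroup T] [Module R T] : Prop :=
  ∀ A ∈ 𝒜, Ext1IsZero R (M ⧸ A) T

/-- A right `R`-module `N` is `M`-`𝒜`-flat if `N ⊗ A → N ⊗ M` is injective for all `A ∈ 𝒜`. -/
def MAFlat (𝒜 : Set (Submodule R M)) (N : Type u) [AddCommGroup N] [Module Rᵐᵒᵖ N] : Prop :=
  ∀ A ∈ 𝒜, Function.Injective (ncMap R N A.subtype)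

/-- A right `R`-module `N` is strongly `M`-`𝒜`-flat if `Tor₁^R(N, M/A) = 0` for all `A ∈ 𝒜`. -/
def SMAFlat (𝒜 : Set (Submodule R M)) (N : Type u) [AddCommGroup N] [Module Rᵐᵒᵖ N] : Prop :=
  ∀ A ∈ 𝒜, Tor1IsZero R N (M ⧸ A)

end Classes

section Flat

variable (R : Type u) [Ring R]

/-- A left `R`-module `Z` is flat if tensoring with it preserves injectivity of morphisms of
right `R`-modules. -/
def FlatLeftModule (Z : Type u) [AddCommGroup Z] [Module R Z] : Prop :=
  ∀ (N N' : Type u) [AddCommGroup N] [Module Rᵐᵒᵖ N] [AddCommGroup N'] [Module Rᵐᵒᵖ N']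
    (g : N' →ₗ[Rᵐᵒᵖ] N), Function.Injective g → Function.Injective (ncMapL R g Z)

end Flat

/-! Under the hypotheses `M ⧸ A` is finitely presented, and both conditions say that `M ⧸ A` is
projective. Projective modules have vanishing `Ext¹` and `Tor₁`. Conversely, write `Z = P₀ ⧸ K` with
`P₀` projective. If `Ext¹(Z, K) = 0`, the identity of `K` extends to `P₀`, so `K` is a direct
summand. If `Tor₁(-, Z) = 0`, then `Ext¹(Z, N⁺) ≅ Tor₁(N, Z)⁺` vanishes for every character module
`N⁺` (tensor-hom adjunction and injectivity of `ℚ/ℤ`), so the embedding `K → K⁺⁺` extends to `P₀`.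
Since characters separate points, a finite linear system over `K` that is solvable in `K⁺⁺` is
solvable in `K`; for finitely presented `Z` this is what it takes to split `P₀ → Z`. -/

open CategoryTheory.Limits

section LinearAlgebra

variable {S A B C : Type*} [Ring S] [AddCommGroup A] [AddCommGroup B] [AddCommGroup C]
  [Module S A] [Module S B] [Module S C]

theorem LinearMap.exists_comp_eq_of_ker_le {p : A →ₗ[S] B} (hp : Function.Surjective p)
    (f : A →ₗ[S] C) (h : LinearMap.ker p ≤ LinearMap.ker f) : ∃ s : B →ₗ[S] C, s ∘ₗ p = f :=
  ⟨(LinearMap.ker p).liftQ f h ∘ₗ (p.quotKerEquivOfSurjective hp).symm.toLinearMap, by ext; simp⟩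

theorem Module.Baer.exists_comp_eq_of_ker_le (hC : Module.Baer S C) (δ : A →ₗ[S] B)
    (χ : A →ₗ[S] C) (h : LinearMap.ker δ ≤ LinearMap.ker χ) : ∃ ψ : B →ₗ[S] C, ψ ∘ₗ δ = χ := by
  obtain ⟨χ', hχ'⟩ := LinearMap.exists_comp_eq_of_ker_le δ.surjective_rangeRestrict χ
    (by rwa [LinearMap.ker_rangeRestrict])
  obtain ⟨ψ, hψ⟩ := hC.extension_property _ (LinearMap.range δ).injective_subtype χ'
  exact ⟨ψ, by rw [← hχ', ← hψ]; rfl⟩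

/-- `f - e` descends along `q` to a section of `π`. -/
theorem Module.Projective.of_ker_le_ker_sub [Module.Projective S A] {π : A →ₗ[S] B}
    {q : C →ₗ[S] B} (hq : Function.Surjective q) {f : C →ₗ[S] A} (hf : π ∘ₗ f = q)
    (e : C →ₗ[S] LinearMap.ker π)
    (hker : LinearMap.ker q ≤ LinearMap.ker (f - (LinearMap.ker π).subtype ∘ₗ e)) :
    Module.Projective S B := by
  obtain ⟨s, hs⟩ := LinearMap.exists_comp_eq_of_ker_le hq _ hker
  have hπs : π ∘ₗ s ∘ₗ q = q := by
    rw [hs, LinearMap.comp_sub, hf, ← LinearMap.comp_assoc, LinearMap.comp_ker_subtype,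
      LinearMap.zero_comp, sub_zero]
  refine .of_split s π (LinearMap.ext fun b => ?_)
  obtain ⟨c, rfl⟩ := hq b
  exact LinearMap.congr_fun hπs c

end LinearAlgebra

namespace CategoryTheory.ProjectiveResolution

variable {R : Type u} [Ring R] {Z T : Type u} [AddCommGroup Z] [Module R Z]
  [AddCommGroup T] [Module R T] (P : ProjectiveResolution (ModuleCat.of R Z))

instance moduleProjective_zero : Module.Projective R (P.complex.X 0) := by
  rw [IsProjective.iff_projective, ModuleCat.of_coe]
  infer_instance

theorem π_zero_surjective : Function.Surjective (P.π.f 0).hom :=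
  (ModuleCat.epi_iff_surjective (P.π.f 0)).1 inferInstance

theorem ker_π_zero : LinearMap.ker (P.π.f 0).hom = LinearMap.range (P.complex.d 1 0).hom :=
  ((ShortComplex.exact_of_g_is_cokernel (ShortComplex.mk _ _ P.complex_d_comp_π_f_zero)
    P.isColimitCokernelCofork).moduleCat_range_eq_ker).symm

theorem d_comp_d_hom : (P.complex.d 1 0).hom ∘ₗ (P.complex.d 2 1).hom = 0 :=
  congrArg ModuleCat.Hom.hom (P.complex.d_comp_d 2 1 0)

theorem ext1IsZero_iff : Ext1IsZero R Z T ↔ ∀ f : P.complex.X 1 →ₗ[R] T,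
    f ∘ₗ (P.complex.d 2 1).hom = 0 →
      ∃ g : P.complex.X 0 →ₗ[R] T, g ∘ₗ (P.complex.d 1 0).hom = f := by
  rw [Ext1IsZero, ((P.isoExt (R := ℤ) 1 (ModuleCat.of R T))).isZero_iff,
    ← HomologicalComplex.exactAt_iff_isZero_homology,
    HomologicalComplex.exactAt_iff' _ 0 1 2 (by simp) (by simp), ShortComplex.moduleCat_exact_iff]
  constructor
  · intro H f hf
    obtain ⟨g, hg⟩ := H (ModuleCat.ofHom f) (ModuleCat.hom_ext hf)
    exact ⟨g.hom, congrArg ModuleCat.Hom.hom hg⟩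
  · intro H f hf
    obtain ⟨g, hg⟩ := H f.hom (congrArg ModuleCat.Hom.hom hf)
    exact ⟨ModuleCat.ofHom g, ModuleCat.hom_ext hg⟩

theorem exists_comp_subtype_eq_of_ext1IsZero (hT : Ext1IsZero R Z T)
    (φ : LinearMap.ker (P.π.f 0).hom →ₗ[R] T) :
    ∃ g : P.complex.X 0 →ₗ[R] T, g ∘ₗ (LinearMap.ker (P.π.f 0).hom).subtype = φ := by
  let d : P.complex.X 1 →ₗ[R] LinearMap.ker (P.π.f 0).hom :=
    (P.complex.d 1 0).hom.codRestrict _ fun y => (P.ker_π_zero).ge ⟨y, rfl⟩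
  have hd : Function.Surjective d := by
    rintro ⟨x, hx⟩
    obtain ⟨y, rfl⟩ := (P.ker_π_zero).le hx
    exact ⟨y, rfl⟩
  have hcocycle : (φ ∘ₗ d) ∘ₗ (P.complex.d 2 1).hom = 0 := by
    ext y
    have : d ((P.complex.d 2 1).hom y) = 0 := Subtype.ext (LinearMap.congr_fun P.d_comp_d_hom y)
    exact (congrArg φ this).trans φ.map_zero
  obtain ⟨g, hg⟩ := (P.ext1IsZero_iff).1 hT (φ ∘ₗ d) hcocycle
  refine ⟨g, LinearMap.ext fun k => ?_⟩
  obtain ⟨y, rfl⟩ := hd k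
  exact LinearMap.congr_fun hg y

theorem ker_ncMap_le_range_of_tor1IsZero {N : Type u} [AddCommGroup N] [Module Rᵐᵒᵖ N]
    (h : Tor1IsZero R N Z) :
    LinearMap.ker (ncMap R N (P.complex.d 1 0).hom) ≤
      LinearMap.range (ncMap R N (P.complex.d 2 1).hom) := by
  have H : IsZero ((((ncTensorFunctor R N).mapHomologicalComplex _).obj P.complex).homology 1) :=
    IsZero.of_iso h (P.isoLeftDerivedObj (ncTensorFunctor R N) 1).symm
  rw [← HomologicalComplex.exactAt_iff_isZero_homology,
    HomologicalComplex.exactAt_iff' _ 2 1 0 (by simp) (by simp),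
    ShortComplex.moduleCat_exact_iff] at H
  exact fun z hz => H z hz

end CategoryTheory.ProjectiveResolution

section CharacterAdjunction

variable {R : Type u} [Ring R] {N : Type u} [AddCommGroup N] [Module Rᵐᵒᵖ N]
  {X Y : Type u} [AddCommGroup X] [Module R X] [AddCommGroup Y] [Module R Y]

/-- One direction of the adjunction `Hom_ℤ(N ⊗[R] X, ℚ/ℤ) ≃ Hom_R(X, N⁺)`; the other is
`homOfTensorChar`. -/
noncomputable def tensorCharOfHom (f : X →ₗ[R] CharacterModule N) :
    NCTensor R N X →ₗ[ℤ] AddCircle (1 : ℚ) :=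
  (ncRel R N X).liftQ (TensorProduct.lift <| LinearMap.flip
    { toFun x := (f x).toIntLinearMap
      map_add' x y := by rw [map_add]; rfl
      map_smul' c x := by rw [map_zsmul]; rfl }) <| by
    rw [ncRel, Submodule.span_le]
    rintro _ ⟨r, n, x, rfl⟩
    refine LinearMap.mem_ker.2 ((map_sub _ _ _).trans ?_)
    show f x (op r • n) - f (r • x) n = 0
    rw [map_smul f r x]
    exact sub_self _

noncomputable def homOfTensorChar (ψ : NCTensor R N X →ₗ[ℤ] AddCircle (1 : ℚ)) :
    X →ₗ[R] CharacterModule N where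
  toFun x := (ψ ∘ₗ (ncRel R N X).mkQ ∘ₗ (TensorProduct.mk ℤ N X).flip x).toAddMonoidHom
  map_add' x y := DFunLike.ext _ _ fun n => by
    show ψ (Submodule.Quotient.mk (n ⊗ₜ[ℤ] (x + y))) =
      ψ (Submodule.Quotient.mk (n ⊗ₜ[ℤ] x)) + ψ (Submodule.Quotient.mk (n ⊗ₜ[ℤ] y))
    rw [TensorProduct.tmul_add, Submodule.Quotient.mk_add, map_add]
  map_smul' r x := DFunLike.ext _ _ fun n => by
    show ψ (Submodule.Quotient.mk (n ⊗ₜ[ℤ] (r • x))) =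
      ψ (Submodule.Quotient.mk ((op r • n) ⊗ₜ[ℤ] x))
    rw [(Submodule.Quotient.eq _).2]
    exact (ncRel R N X).neg_mem_iff.1 (by
      rw [neg_sub]; exact Submodule.subset_span ⟨r, n, x, rfl⟩)

theorem tensorCharOfHom_comp_ncMap (f : Y →ₗ[R] CharacterModule N) (d : X →ₗ[R] Y) :
    tensorCharOfHom f ∘ₗ ncMap R N d = tensorCharOfHom (f ∘ₗ d) :=
  Submodule.linearMap_qext _ (TensorProduct.ext' fun _ _ => rfl)

theorem tensorCharOfHom_zero : tensorCharOfHom (0 : X →ₗ[R] CharacterModule N) = 0 :=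
  Submodule.linearMap_qext _ (TensorProduct.ext' fun _ _ => rfl)

theorem homOfTensorChar_comp_ncMap (ψ : NCTensor R N Y →ₗ[ℤ] AddCircle (1 : ℚ))
    (d : X →ₗ[R] Y) : homOfTensorChar (ψ ∘ₗ ncMap R N d) = homOfTensorChar ψ ∘ₗ d :=
  LinearMap.ext fun _ => DFunLike.ext _ _ fun _ => rfl

theorem homOfTensorChar_tensorCharOfHom (f : X →ₗ[R] CharacterModule N) :
    homOfTensorChar (tensorCharOfHom f) = f :=
  LinearMap.ext fun _ => DFunLike.ext _ _ fun _ => rfl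

end CharacterAdjunction

section Vanishing

variable {R : Type u} [Ring R] {Z : Type u} [AddCommGroup Z] [Module R Z]

theorem ext1IsZero_characterModule_of_tor1IsZero {N : Type u} [AddCommGroup N] [Module Rᵐᵒᵖ N]
    (h : Tor1IsZero R N Z) : Ext1IsZero R Z (CharacterModule N) := by
  let P := projectiveResolution (ModuleCat.of R Z)
  refine (P.ext1IsZero_iff).2 fun f hf => ?_
  obtain ⟨ψ, hψ⟩ := (Module.Baer.of_divisible (AddCircle (1 : ℚ))).exists_comp_eq_of_ker_le
    (ncMap R N (P.complex.d 1 0).hom) (tensorCharOfHom f) fun z hz => by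
      obtain ⟨w, rfl⟩ := P.ker_ncMap_le_range_of_tor1IsZero h hz
      rw [LinearMap.mem_ker, ← LinearMap.comp_apply, tensorCharOfHom_comp_ncMap, hf,
        tensorCharOfHom_zero, LinearMap.zero_apply]
  exact ⟨homOfTensorChar ψ, by
    rw [← homOfTensorChar_comp_ncMap, hψ, homOfTensorChar_tensorCharOfHom]⟩

theorem ext1IsZero_of_projective [Module.Projective R Z] (T : Type u) [AddCommGroup T]
    [Module R T] : Ext1IsZero R Z T :=
  have : Projective (ModuleCat.of R Z) := (IsProjective.iff_projective Z).1 inferInstance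
  isZero_Ext_succ_of_projective (ModuleCat.of R Z) (ModuleCat.of R T) 0

theorem tor1IsZero_of_projective [Module.Projective R Z] (N : Type u) [AddCommGroup N]
    [Module Rᵐᵒᵖ N] : Tor1IsZero R N Z :=
  have : Projective (ModuleCat.of R Z) := (IsProjective.iff_projective Z).1 inferInstance
  (ncTensorFunctor R N).isZero_leftDerived_obj_projective_succ 0 (ModuleCat.of R Z)

theorem projective_of_forall_ext1IsZero
    (h : ∀ (T : Type u) [AddCommGroup T] [Module R T], Ext1IsZero R Z T) :
    Module.Projective R Z := by
  let P := projectiveResolution (ModuleCat.of R Z)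
  let K := LinearMap.ker (P.π.f 0).hom
  obtain ⟨g, hg⟩ := P.exists_comp_subtype_eq_of_ext1IsZero (h K) LinearMap.id
  refine .of_ker_le_ker_sub P.π_zero_surjective (LinearMap.comp_id _) g fun x hx => ?_
  have hgx : g x = ⟨x, hx⟩ := LinearMap.congr_fun hg ⟨x, hx⟩
  exact LinearMap.mem_ker.2 <| sub_eq_zero.2 (congrArg Subtype.val hgx).symm

end Vanishing

theorem CharacterModule.exists_character_vanishing_of_notMem {A : Type*} [AddCommGroup A]
    {H : AddSubgroup A} {a : A} (ha : a ∉ H) : ∃ χ : CharacterModule A, (∀ b ∈ H, χ b = 0) ∧ χ a ≠ 0 := by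
  obtain ⟨c, hc⟩ := CharacterModule.exists_character_apply_ne_zero_of_ne_zero
    (a := (QuotientAddGroup.mk a : A ⧸ H)) (by rwa [Ne, QuotientAddGroup.eq_zero_iff])
  refine ⟨(c : A ⧸ H →+ AddCircle (1 : ℚ)).comp (QuotientAddGroup.mk' H), fun b hb => ?_, hc⟩
  show c (QuotientAddGroup.mk b) = 0
  rw [(QuotientAddGroup.eq_zero_iff b).2 hb, map_zero]

theorem CharacterModule.sum_apply {A ι : Type*} [AddCommGroup A] (s : Finset ι)
    (f : ι → CharacterModule A) (a : A) : (∑ i ∈ s, f i) a = ∑ i ∈ s, f i a :=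
  AddMonoidHom.finsetSum_apply _ _ _

section Purity

variable {R : Type u} [Ring R] {K : Type u} [AddCommGroup K] [Module R K]

variable (R) in
def toCharChar : K →ₗ[R] CharacterModule (CharacterModule K) where
  toFun k := AddMonoidHom.mk' (fun c => c k) fun _ _ => rfl
  map_add' k k' := DFunLike.ext _ _ fun c => map_add c k k'
  map_smul' _ _ := rfl

/-- `K` is pure in `K⁺⁺`: if `k ∉ range Φ` for the system `Φ x = (∑ j, v i j • x j)ᵢ`, a character
`χ = ∑ χᵢ` separating `k` from `range Φ` solves the transposed system, which kills `k`. -/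
theorem exists_sum_smul_eq_of_toCharChar {m n : ℕ} (v : Fin m → Fin n → R) (k : Fin m → K)
    (y : Fin n → CharacterModule (CharacterModule K))
    (hy : ∀ i, ∑ j, v i j • y j = toCharChar R (k i)) :
    ∃ x : Fin n → K, ∀ i, ∑ j, v i j • x j = k i := by
  let Φ : (Fin n → K) →+ (Fin m → K) :=
    { toFun x i := ∑ j, v i j • x j
      map_zero' := by ext; simp
      map_add' x x' := by ext; simp [smul_add, Finset.sum_add_distrib] }
  by_contra! hk
  obtain ⟨χ, hχΦ, hχk⟩ :=
      CharacterModule.exists_character_vanishing_of_notMem (H := Φ.range) (a := k) <| by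
        rintro ⟨x, hx⟩
        obtain ⟨i, hi⟩ := hk x
        exact hi (congrFun hx i)
  let χi (i : Fin m) : CharacterModule K := χ.comp (AddMonoidHom.single (fun _ => K) i)
  have hχ (w : Fin m → K) : χ w = ∑ i, χi i (w i) := by
    conv_lhs => rw [← Finset.univ_sum_single w]
    exact map_sum χ _ _
  have htranspose (j : Fin n) : ∑ i, op (v i j) • χi i = 0 := DFunLike.ext _ _ fun z => by
    have := hχΦ _ ⟨Pi.single j z, rfl⟩
    rw [hχ] at this
    simp only [Φ, AddMonoidHom.coe_mk, ZeroHom.coe_mk, Pi.single_apply, smul_ite, smul_zero,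
      Finset.sum_ite_eq', Finset.mem_univ, ↓reduceIte] at this
    rw [CharacterModule.sum_apply]
    exact this
  apply hχk
  calc χ k = ∑ i, toCharChar R (k i) (χi i) := hχ k
    _ = ∑ i, ∑ j, y j (op (v i j) • χi i) := by
      simp_rw [← hy, CharacterModule.sum_apply]; rfl
    _ = ∑ j, y j (∑ i, op (v i j) • χi i) := by rw [Finset.sum_comm]; simp [map_sum]
    _ = 0 := by simp [htranspose]

theorem exists_comp_subtype_eq_of_toCharChar {n : ℕ} {L : Submodule R (Fin n → R)} (hL : L.FG)
    (φ : L →ₗ[R] K) (ψ : (Fin n → R) →ₗ[R] CharacterModule (CharacterModule K))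
    (hψ : ψ ∘ₗ L.subtype = toCharChar R ∘ₗ φ) :
    ∃ ℓ : (Fin n → R) →ₗ[R] K, ℓ ∘ₗ L.subtype = φ := by
  obtain ⟨m, v, rfl⟩ := Submodule.fg_iff_exists_fin_generating_family.mp hL
  have hv (i : Fin m) : v i ∈ Submodule.span R (Set.range v) := Submodule.subset_span ⟨i, rfl⟩
  obtain ⟨x, hx⟩ := exists_sum_smul_eq_of_toCharChar v (fun i => φ ⟨v i, hv i⟩)
    (fun j => ψ fun j' => if j = j' then 1 else 0) fun i => by
      rw [← LinearMap.comp_apply, ← hψ, LinearMap.comp_apply, Submodule.subtype_apply,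
        LinearMap.pi_apply_eq_sum_univ ψ]
  refine ⟨Fintype.linearCombination R x, LinearMap.ext_on Submodule.span_span_coe_preimage ?_⟩
  rintro ⟨_, _⟩ ⟨i, rfl⟩
  exact hx i

end Purity

theorem projective_of_forall_tor1IsZero {R : Type u} [Ring R] {Z : Type u} [AddCommGroup Z]
    [Module R Z] [Module.FinitePresentation R Z]
    (h : ∀ (N : Type u) [AddCommGroup N] [Module Rᵐᵒᵖ N], Tor1IsZero R N Z) :
    Module.Projective R Z := by
  let P := projectiveResolution (ModuleCat.of R Z)
  let K := LinearMap.ker (P.π.f 0).hom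
  obtain ⟨g, hg⟩ := P.exists_comp_subtype_eq_of_ext1IsZero
    (ext1IsZero_characterModule_of_tor1IsZero (h (CharacterModule K))) (toCharChar R)
  obtain ⟨n, q, hq⟩ := Module.Finite.exists_fin' R Z
  obtain ⟨f, hf⟩ := Module.projective_lifting_property _ q P.π_zero_surjective
  let φ : LinearMap.ker q →ₗ[R] K := (f ∘ₗ (LinearMap.ker q).subtype).codRestrict K fun x =>
    (LinearMap.congr_fun hf x).trans x.2
  obtain ⟨ℓ, hℓ⟩ := exists_comp_subtype_eq_of_toCharChar (Module.FinitePresentation.fg_ker q hq) φ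
    (g ∘ₗ f) (LinearMap.ext fun x => LinearMap.congr_fun hg (φ x))
  refine .of_ker_le_ker_sub hq hf ℓ fun x hx => ?_
  have hℓx : ℓ x = φ ⟨x, hx⟩ := LinearMap.congr_fun hℓ ⟨x, hx⟩
  exact LinearMap.mem_ker.2 <| sub_eq_zero.2 (congrArg Subtype.val hℓx).symm

/-- Let `M` be a finitely presented left `R`-module that is `𝒜`-coherent (every `A ∈ 𝒜` is
finitely presented). Then every left `R`-module is strongly `M`-`𝒜`-injective if and only if
every right `R`-module is strongly `M`-`𝒜`-flat. -/
theorem stmt7 (R : Type u) [Ring R] (M : Type u) [AddCommGroup M] [Module R M]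
    (𝒜 : Set (Submodule R M)) [Module.FinitePresentation R M]
    (h𝒜 : ∀ A ∈ 𝒜, Module.FinitePresentation R A) :
    (∀ (T : Type u) [AddCommGroup T] [Module R T], SMAInjective R M 𝒜 T) ↔
      (∀ (N : Type u) [AddCommGroup N] [Module Rᵐᵒᵖ N], SMAFlat R M 𝒜 N) := by
  constructor
  · intro h N _ _ A hA
    have := projective_of_forall_ext1IsZero fun T _ _ => h T A hA
    exact tor1IsZero_of_projective N
  · intro h T _ _ A hA
    have : Module.FinitePresentation R (M ⧸ A) :=
      Module.finitePresentation_of_surjective A.mkQ A.mkQ_surjective <| by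
        rw [Submodule.ker_mkQ]
        have := h𝒜 A hA
        exact Module.Finite.iff_fg.mp inferInstance
    have := projective_of_forall_tor1IsZero fun N _ _ => h N A hA
    exact ext1IsZero_of_projective T
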